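/- Let r be a point on the x-axis and p a point of the plane. For every point t with t₁ < p₁ (i.e. t ∈ H_p^L) satisfying dist(r,t) > dist(r,p) (i.e. t ∈ H_p^L − D_p(r)), there exists a unique point c on the x-axis with dist(c,p) = dist(c,t); moreover this c satisfies c₁ < r₁, i.e. the center of the unique circle centered on the x-axis passing through p and t lies strictly to the left of r. -/

import Mathlib

/-!
Moving a point `x` along a direction `u` changes `dist x p ^ 2 - dist x t ^ 2` affinely, with slope
`2 * ⟪u, t - p⟫`. Along the x-axis this slope is `2 * (t 0 - p 0) < 0`, so the axis meets the
perpendicular bisector of `p` and `t` in exactly one point `c`; and since this quantity is negative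
at `r` (because `t` lies outside the disk), `c` lies to the left of `r`.
-/

open RealInnerProductSpace

section InnerProductSpace

variable {E : Type*} [NormedAddCommGroup E] [InnerProductSpace ℝ E]

lemma dist_sq_sub_dist_sq_add_smul (x u p t : E) (s : ℝ) :
    dist (x + s • u) p ^ 2 - dist (x + s • u) t ^ 2 =
      dist x p ^ 2 - dist x t ^ 2 + 2 * s * ⟪u, t - p⟫ := by
  simp only [dist_eq_norm, add_sub_right_comm x (s • u), norm_add_sq_real, inner_smul_right]
  have : ⟪x - p, u⟫ - ⟪x - t, u⟫ = ⟪u, t - p⟫ := by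
    rw [← inner_sub_left, sub_sub_sub_cancel_left, real_inner_comm]
  linear_combination 2 * s * this

lemma dist_add_smul_eq_dist_add_smul_iff {x u p t : E} (hu : ⟪u, t - p⟫ ≠ 0) (s : ℝ) :
    dist (x + s • u) p = dist (x + s • u) t ↔
      s = (dist x t ^ 2 - dist x p ^ 2) / (2 * ⟪u, t - p⟫) := by
  rw [← sq_eq_sq₀ dist_nonneg dist_nonneg, ← sub_eq_zero, dist_sq_sub_dist_sq_add_smul,
    eq_div_iff (mul_ne_zero two_ne_zero hu)]
  constructor <;> intro h <;> linear_combination h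

end InnerProductSpace

lemma EuclideanSpace.eq_add_smul_single_zero_of_apply_one_eq {x y : EuclideanSpace ℝ (Fin 2)}
    (h : x 1 = y 1) : x = y + (x 0 - y 0) • EuclideanSpace.single 0 1 := by
  ext i
  fin_cases i <;> simp [h]

/-- Lemma 1(ii), second item: for a point `t` strictly to the left of `p`
lying outside the closed disk centered at `r` (on the x-axis) through `p`,
there is a unique point `c` on the x-axis equidistant from `p` and `t`, and it
lies strictly to the left of `r`. -/
theorem unique_center_left_halfplane_outside_disk
    (r p t : EuclideanSpace ℝ (Fin 2))
    (hr : r 1 = 0) (ht : t 0 < p 0) (htd : dist r p < dist r t) :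
    ∃ c : EuclideanSpace ℝ (Fin 2),
      (c 1 = 0 ∧ dist c p = dist c t ∧ c 0 < r 0) ∧
      ∀ c' : EuclideanSpace ℝ (Fin 2),
        c' 1 = 0 → dist c' p = dist c' t → c' = c := by
  set e := EuclideanSpace.single (0 : Fin 2) (1 : ℝ)
  have he : ⟪e, t - p⟫ = t 0 - p 0 := by simp [e, EuclideanSpace.inner_single_left]
  have hbis := dist_add_smul_eq_dist_add_smul_iff (x := r) (he ▸ (sub_neg.2 ht).ne)
  rw [he] at hbis
  set s := (dist r t ^ 2 - dist r p ^ 2) / (2 * (t 0 - p 0))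
  have hs : s < 0 := div_neg_of_pos_of_neg (sub_pos.2 (by gcongr)) (by linarith)
  refine ⟨r + s • e, ⟨by simp [e, hr], (hbis s).2 rfl, by simpa [e] using hs⟩, ?_⟩
  intro c' hc' hc'_bis
  have hc'_eq := EuclideanSpace.eq_add_smul_single_zero_of_apply_one_eq (hc'.trans hr.symm)
  rw [hc'_eq, hbis] at hc'_bis
  rwa [hc'_bis] at hc'_eq
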